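/- arXiv:1405.5184 — 8 statements merged into one kernel-verified Lean document; each statement's English description precedes it below -/
import Mathlib

section
/- Let 𝒜 be a full reflective subcategory of a category 𝒦 with reflection R : 𝒦 → 𝒜, and let F ⊣ G be an adjunction with F, G : 𝒦 → 𝒦. If F(𝒜) ⊆ 𝒜 and G(𝒜) ⊆ 𝒜, then there is a natural isomorphism R(F(X)) ≅ F(R(X)) for every object X of 𝒦. -/
/-!
Since `F` and `G` preserve `𝒜`, they restrict to an adjunction `F' ⊣ G'` on `𝒜`. Then `R ⋙ F'`
and `F ⋙ R` are left adjoint to `G' ⋙ i ≅ i ⋙ G`, so they are isomorphic by uniqueness of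
adjoints; composing with `i` and using `F' ⋙ i ≅ i ⋙ F` gives the claim.
-/

open CategoryTheory

namespace CategoryTheory

variable {K A : Type*} [Category K] [Category A]

noncomputable def Functor.restrictToReflective (F : K ⥤ K) (i : A ⥤ K) [Reflective i] : A ⥤ A :=
  i ⋙ F ⋙ reflector i

variable {i : A ⥤ K} [Reflective i]

noncomputable def Functor.restrictToReflectiveCompIso {F : K ⥤ K}
    (hF : ∀ a : A, i.essImage (F.obj (i.obj a))) :
    F.restrictToReflective i ⋙ i ≅ i ⋙ F :=
  NatIso.ofComponents
    (fun a => have := Functor.essImage.unit_isIso (hF a)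
      (asIso ((reflectorAdjunction i).unit.app (F.obj (i.obj a)))).symm)
    (by simp [Functor.restrictToReflective])

noncomputable def Adjunction.restrictToReflective {F G : K ⥤ K} (adj : F ⊣ G)
    (hF : ∀ a : A, i.essImage (F.obj (i.obj a)))
    (hG : ∀ a : A, i.essImage (G.obj (i.obj a))) :
    F.restrictToReflective i ⊣ G.restrictToReflective i :=
  adj.restrictFullyFaithful i.fullyFaithfulOfReflective i.fullyFaithfulOfReflective
    (Functor.restrictToReflectiveCompIso hF).symm (Functor.restrictToReflectiveCompIso hG).symm

noncomputable def Adjunction.reflectorCompIso {F G : K ⥤ K} (adj : F ⊣ G)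
    (hF : ∀ a : A, i.essImage (F.obj (i.obj a)))
    (hG : ∀ a : A, i.essImage (G.obj (i.obj a))) :
    F ⋙ reflector i ≅ reflector i ⋙ F.restrictToReflective i :=
  (conjugateIsoEquiv ((reflectorAdjunction i).comp (adj.restrictToReflective hF hG))
    (adj.comp (reflectorAdjunction i))).symm (Functor.restrictToReflectiveCompIso hG)

end CategoryTheory

/-- If `𝒜` is a full reflective subcategory of `𝒦` (inclusion `i`, reflection `R`),
`F ⊣ G` an adjunction of endofunctors of `𝒦`, and both `F` and `G` send objects of `𝒜`
into (the essential image of) `𝒜`, then there is a natural isomorphism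
`R(F(X)) ≅ F(R(X))` for every `X ∈ 𝒦`. -/
theorem stmt0 {K : Type*} {A : Type*} [Category K] [Category A]
    (i : A ⥤ K) [Reflective i] (F G : K ⥤ K) (adj : F ⊣ G)
    (hF : ∀ a : A, i.essImage (F.obj (i.obj a)))
    (hG : ∀ a : A, i.essImage (G.obj (i.obj a))) :
    Nonempty ((F ⋙ reflector i ⋙ i) ≅ (reflector i ⋙ i ⋙ F)) :=
  ⟨Functor.isoWhiskerRight (adj.reflectorCompIso hF hG) i ≪≫
    Functor.isoWhiskerLeft (reflector i) (Functor.restrictToReflectiveCompIso hF)⟩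
end

section
/- Let X = ⋃ᵢ Zᵢ be a weak transition system defined as follows: states {I, F, a, b₁, …, b_n}, actions {u, v} with μ(u) ≠ μ(v), and transitions (I,u,v,F), (I,v,u,F), (I,u,a), (a,v,F), (I,v,bᵢ), (bᵢ,u,F) for 1 ≤ i ≤ n, where n ≥ 2. Then X satisfies the Multiset axiom, the Composition axiom, all actions are used, and the Intermediate state axiom, but X does not satisfy the Unique intermediate state axiom (i.e., X is cubical but not regular). -/
/-- The Multiset axiom for a transition relation: transitions are closed under
permutation of the list of actions. -/
def MultisetAxiom {S L : Type*} (T : S → List L → S → Prop) : Prop :=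
  ∀ (α : S) (l l' : List L) (β : S), T α l β → l.Perm l' → T α l' β

/-- The Composition axiom (the 5-ary "patching" axiom). -/
def CompositionAxiom {S L : Type*} (T : S → List L → S → Prop) : Prop :=
  ∀ (α : S) (l₁ l₂ l₃ : List L) (β ν₁ ν₂ : S),
    l₁ ≠ [] → l₂ ≠ [] → l₃ ≠ [] →
    T α (l₁ ++ l₂ ++ l₃) β → T α l₁ ν₁ → T ν₁ (l₂ ++ l₃) β →
    T α (l₁ ++ l₂) ν₂ → T ν₂ l₃ β → T ν₁ l₂ ν₂

/-- Every action is used by some 1-transition. -/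
def AllUsed {S L : Type*} (T : S → List L → S → Prop) : Prop :=
  ∀ u : L, ∃ α β, T α [u] β

/-- The Intermediate state axiom: every splitting of a transition admits an
intermediate state. -/
def IntermediateAxiom {S L : Type*} (T : S → List L → S → Prop) : Prop :=
  ∀ (α : S) (l₁ l₂ : List L) (β : S), l₁ ≠ [] → l₂ ≠ [] → T α (l₁ ++ l₂) β →
    ∃ ν, T α l₁ ν ∧ T ν l₂ β

/-- The Unique intermediate state axiom (CSA2). -/
def CSA2 {S L : Type*} (T : S → List L → S → Prop) : Prop :=
  ∀ (α : S) (l₁ l₂ : List L) (β : S), l₁ ≠ [] → l₂ ≠ [] → T α (l₁ ++ l₂) β →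
    ∃! ν, T α l₁ ν ∧ T ν l₂ β

/-- The states of the example: initial `I`, final `F`, `a`, and `b i` for `i < n`. -/
inductive St4 (n : ℕ) : Type
  | I | F | a | b (i : Fin n)

/-- The transitions of the example: with actions `u = true`, `v = false`, the
transitions are `(I,u,v,F)`, `(I,v,u,F)`, `(I,u,a)`, `(a,v,F)`, `(I,v,bᵢ)`, `(bᵢ,u,F)`. -/
inductive Tr4 (n : ℕ) : St4 n → List Bool → St4 n → Prop
  | uv : Tr4 n .I [true, false] .F
  | vu : Tr4 n .I [false, true] .F
  | ua : Tr4 n .I [true] .a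
  | av : Tr4 n .a [false] .F
  | vb (i : Fin n) : Tr4 n .I [false] (.b i)
  | bu (i : Fin n) : Tr4 n (.b i) [true] .F

lemma perm_singleton' {x : Bool} {l : List Bool} (h : List.Perm [x] l) : l = [x] :=
  (List.singleton_perm.mp h).symm

lemma perm_pair' {x y : Bool} {l : List Bool} (h : List.Perm [x, y] l) :
    l = [x, y] ∨ l = [y, x] := by
  match l, h.length_eq with
  | [c, d], _ =>
    revert h
    rcases x <;> rcases y <;> rcases c <;> rcases d <;> decide

lemma tr4_len {n : ℕ} {α β : St4 n} {l : List Bool} (h : Tr4 n α l β) :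
    l.length ≤ 2 := by cases h <;> simp

theorem stmt4' (n : ℕ) (hn : 2 ≤ n) (Lab : Type) (μ : Bool → Lab)
    (hμ : μ true ≠ μ false) :
    MultisetAxiom (Tr4 n) ∧ CompositionAxiom (Tr4 n) ∧ AllUsed (Tr4 n) ∧
    IntermediateAxiom (Tr4 n) ∧ ¬ CSA2 (Tr4 n) := by
  refine ⟨?_, ?_, ?_, ?_, ?_⟩
  · -- Multiset
    intro α l l' β h hp
    cases h with
    | uv => rcases perm_pair' hp with rfl | rfl
            · exact .uv
            · exact .vu
    | vu => rcases perm_pair' hp with rfl | rfl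
            · exact .vu
            · exact .uv
    | ua => rw [perm_singleton' hp]; exact .ua
    | av => rw [perm_singleton' hp]; exact .av
    | vb i => rw [perm_singleton' hp]; exact .vb i
    | bu i => rw [perm_singleton' hp]; exact .bu i
  · -- Composition: vacuous, no transition of length ≥ 3
    intro α l₁ l₂ l₃ β ν₁ ν₂ h1 h2 h3 hT _ _ _ _
    exfalso
    have := tr4_len hT
    simp only [List.length_append] at this
    have e1 : 1 ≤ l₁.length := List.length_pos_iff.mpr h1
    have e2 : 1 ≤ l₂.length := List.length_pos_iff.mpr h2
    have e3 : 1 ≤ l₃.length := List.length_pos_iff.mpr h3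
    omega
  · -- AllUsed
    intro u
    cases u
    · exact ⟨_, _, .av⟩
    · exact ⟨_, _, .ua⟩
  · -- Intermediate
    intro α l₁ l₂ β h1 h2 hT
    obtain ⟨m, hm⟩ : ∃ m, m = l₁ ++ l₂ := ⟨_, rfl⟩
    rw [← hm] at hT
    obtain ⟨c, l₁', rfl⟩ := List.exists_cons_of_ne_nil h1
    obtain ⟨d, l₂', rfl⟩ := List.exists_cons_of_ne_nil h2
    cases hT with
    | uv =>
      rcases l₁' with _ | ⟨e, l₁''⟩ <;> simp_all
      obtain ⟨rfl, rfl, rfl⟩ := hm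
      exact ⟨.a, .ua, .av⟩
    | vu =>
      rcases l₁' with _ | ⟨e, l₁''⟩ <;> simp_all
      obtain ⟨rfl, rfl, rfl⟩ := hm
      exact ⟨.b ⟨0, by omega⟩, .vb _, .bu _⟩
    | ua => simp_all
    | av => simp_all
    | vb i => simp_all
    | bu i => simp_all
  · -- ¬ CSA2
    intro h
    obtain ⟨ν, _, huniq⟩ := h .I [false] [true] .F (by simp) (by simp) .vu
    have h0 := huniq (.b ⟨0, by omega⟩) ⟨.vb _, .bu _⟩
    have h1 := huniq (.b ⟨1, by omega⟩) ⟨.vb _, .bu _⟩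
    rw [← h0] at h1
    simp [St4.b.injEq, Fin.ext_iff] at h1

/-- for `n ≥ 2` and a labelling map `μ` with `μ(u) ≠ μ(v)`, the weak
transition system above satisfies the Multiset axiom, the Composition axiom,
all actions are used, and the Intermediate state axiom (so it is cubical), but it
does not satisfy the Unique intermediate state axiom (so it is not regular). -/
theorem stmt4 (n : ℕ) (hn : 2 ≤ n) (Lab : Type) (μ : Bool → Lab)
    (hμ : μ true ≠ μ false) :
    MultisetAxiom (Tr4 n) ∧ CompositionAxiom (Tr4 n) ∧ AllUsed (Tr4 n) ∧
    IntermediateAxiom (Tr4 n) ∧ ¬ CSA2 (Tr4 n) := stmt4' n hn Lab μ hμ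
end

section
/- Let X = colim Xᵢ be a colimit of weak transition systems whose set of transitions is generated as follows: starting from the union G₀ of the images of the transitions of the Xᵢ, one closes transfinitely under the Composition axiom (adding (ν₁,u_{p+1},…,u_{p+q},ν₂) whenever the five composition-axiom premises lie in the current set). If every Xᵢ satisfies the Intermediate state axiom, then every tuple in the closure satisfies the Intermediate state axiom; that is, the colimit X satisfies the Intermediate state axiom. -/
/-- The closure of a set of tuples `G₀` under the Composition axiom rule:
this is the (transfinite) closure adding `(ν₁, l₂, ν₂)` whenever the five
composition-axiom premises lie in the current set. -/
inductive CompClosure {S L : Type*} (G₀ : S → List L → S → Prop) :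
    S → List L → S → Prop
  | base {α : S} {l : List L} {β : S} : G₀ α l β → CompClosure G₀ α l β
  | comp {α β ν₁ ν₂ : S} {l₁ l₂ l₃ : List L} :
      l₁ ≠ [] → l₂ ≠ [] → l₃ ≠ [] →
      CompClosure G₀ α (l₁ ++ l₂ ++ l₃) β → CompClosure G₀ α l₁ ν₁ →
      CompClosure G₀ ν₁ (l₂ ++ l₃) β → CompClosure G₀ α (l₁ ++ l₂) ν₂ →
      CompClosure G₀ ν₂ l₃ β → CompClosure G₀ ν₁ l₂ ν₂

/-- if every tuple of `G₀` (the union of the images of the transitions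
of the systems `Xᵢ`) satisfies the Intermediate state axiom relative to the closure,
then every tuple of the closure of `G₀` under the Composition axiom rule satisfies
the Intermediate state axiom; i.e. the colimit satisfies the Intermediate state
axiom. -/
theorem stmt7 {S L : Type*} (G₀ : S → List L → S → Prop)
    (hbase : ∀ (α : S) (l₁ l₂ : List L) (β : S), l₁ ≠ [] → l₂ ≠ [] →
      G₀ α (l₁ ++ l₂) β → ∃ ν, CompClosure G₀ α l₁ ν ∧ CompClosure G₀ ν l₂ β) :
    IntermediateAxiom (CompClosure G₀) := by
  suffices aux : ∀ (α : S) (l : List L) (β : S), CompClosure G₀ α l β →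
      ∀ (m₁ m₂ : List L), m₁ ≠ [] → m₂ ≠ [] → l = m₁ ++ m₂ →
      ∃ ν, CompClosure G₀ α m₁ ν ∧ CompClosure G₀ ν m₂ β by
    intro α l₁ l₂ β h₁ h₂ h
    exact aux α (l₁ ++ l₂) β h l₁ l₂ h₁ h₂ rfl
  intro α l β h
  induction h with
  | base hg =>
    intro m₁ m₂ hm1 hm2 heq
    subst heq
    exact hbase _ _ _ _ hm1 hm2 hg
  | @comp α β ν₁ ν₂ l₁ l₂ l₃ h1 h2 h3 hT ha hb hc hd ih1 ih2 ih3 ih4 ih5 =>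
    intro m₁ m₂ hm1 hm2 heq
    subst heq
    obtain ⟨ν, hν1, hν2⟩ := ih3 m₁ (m₂ ++ l₃) hm1 (by simp [hm2])
      (by simp [List.append_assoc])
    refine ⟨ν, hν1, ?_⟩
    exact CompClosure.comp hm1 hm2 h3
      hb hν1 hν2
      (CompClosure.comp h1 h2 h3 hT ha hb hc hd) hd
end

section
/- Let X be a combinatorially fibrant cubical transition system, i.e., for any n ≥ 1, states α, β, and actions u₁,v₁,…,uₙ,vₙ with μ(uᵢ) = μ(vᵢ) for all i, if (α,u₁,…,uₙ,β) is a transition then so is (α,v₁,…,vₙ,β). Define Path(X) with the same states S, actions L ×_Σ L = {(u,v) ∈ L × L : μ(u) = μ(v)} labelled by μ, and transitions the tuples (α,(u₁⁰,u₁¹),…,(uₙ⁰,uₙ¹),β) such that all 2ⁿ tuples (α,u₁^{ε₁},…,uₙ^{εₙ},β) with εᵢ ∈ {0,1} are transitions of X. Then Path(X) is a cubical transition system, and a tuple (α,(u₁⁰,u₁¹),…,(uₙ⁰,uₙ¹),β) is a transition of Path(X) if and only if there exist ε₁,…,εₙ ∈ {0,1} such that (α,u₁^{ε₁},…,uₙ^{εₙ},β)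 is a transition of X. -/
/-- `Sel l l'` : the list `l'` of actions is obtained from the list `l` of pairs of
actions by choosing, in each position, either the first or the second component. -/
def Sel {L : Type*} : List (L × L) → List L → Prop :=
  List.Forall₂ (fun p u => u = p.1 ∨ u = p.2)

/-- A cubical transition system is combinatorially fibrant if whenever
`(α,u₁,…,uₙ,β)` is a transition and `μ(uᵢ) = μ(vᵢ)` for all `i`, the tuple
`(α,v₁,…,vₙ,β)` is also a transition. -/
def CombFibrant {S L Lab : Type*} (μ : L → Lab) (T : S → List L → S → Prop) : Prop :=
  ∀ (α : S) (l l' : List L) (β : S), T α l β →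
    List.Forall₂ (fun u v => μ u = μ v) l l' → T α l' β

/-- The transitions of the path object `Path(X)`: states are unchanged, actions are
the pairs `(u,v)` with `μ(u) = μ(v)`, and `(α,(u₁⁰,u₁¹),…,(uₙ⁰,uₙ¹),β)` is a
transition iff all `2ⁿ` selections `(α,u₁^{ε₁},…,uₙ^{εₙ},β)` are transitions of `X`. -/
def PathT {S L Lab : Type*} (μ : L → Lab) (T : S → List L → S → Prop) :
    S → List (L × L) → S → Prop :=
  fun α l β => (∀ p ∈ l, μ p.1 = μ p.2) ∧ ∀ l', Sel l l' → T α l' β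

/-! Combinatorial fibrancy makes a transition of `X` along one selection of a list of
pairs a transition along every other selection, since any two selections carry the same
labels. So a tuple is a transition of `Path(X)` as soon as one selection is a transition
of `X`; the Composition and Intermediate state axioms for `Path(X)` then follow from those
of `X` applied to the selection of first components. -/

namespace Sel

variable {L : Type*}

lemma map_fst (l : List (L × L)) : Sel l (l.map Prod.fst) :=
  List.forall₂_map_right_iff.2 (List.forall₂_same.2 fun _ _ => Or.inl rfl)

lemma append {l₁ l₂ : List (L × L)} {a₁ a₂ : List L} (h₁ : Sel l₁ a₁) (h₂ : Sel l₂ a₂) :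
    Sel (l₁ ++ l₂) (a₁ ++ a₂) :=
  List.rel_append h₁ h₂

lemma ne_nil {l : List (L × L)} {a : List L} (h : Sel l a) (hl : l ≠ []) : a ≠ [] := by
  rintro rfl
  exact hl (List.forall₂_nil_right_iff.1 h)

lemma forall₂_labels {Lab : Type*} (μ : L → Lab) {l : List (L × L)} {a b : List L}
    (hl : ∀ p ∈ l, μ p.1 = μ p.2) (ha : Sel l a) (hb : Sel l b) :
    List.Forall₂ (fun u v => μ u = μ v) a b := by
  induction ha generalizing b with
  | nil => cases hb; exact List.Forall₂.nil
  | @cons p u l a hp _ ih =>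
    cases hb with
    | cons hq hb =>
      refine List.Forall₂.cons ?_ (ih (fun q hq => hl q (List.mem_cons_of_mem _ hq)) hb)
      have hμp := hl p List.mem_cons_self
      rcases hp with rfl | rfl <;> rcases hq with rfl | rfl <;> simp [hμp]

end Sel

section PathT

variable {S L Lab : Type*} {μ : L → Lab} {T : S → List L → S → Prop}

lemma pathT_of_sel (hcf : CombFibrant μ T) {α β : S} {l : List (L × L)} {a : List L}
    (hl : ∀ p ∈ l, μ p.1 = μ p.2) (ha : Sel l a) (hT : T α a β) : PathT μ T α l β :=
  ⟨hl, fun _ hb => hcf _ _ _ _ hT (Sel.forall₂_labels μ hl ha hb)⟩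

lemma PathT.map_fst {α β : S} {l : List (L × L)} (h : PathT μ T α l β) :
    T α (l.map Prod.fst) β :=
  h.2 _ (Sel.map_fst l)

lemma pathT_iff_exists_sel (hcf : CombFibrant μ T) (α : S) (l : List (L × L)) (β : S) :
    PathT μ T α l β ↔ (∀ p ∈ l, μ p.1 = μ p.2) ∧ ∃ a, Sel l a ∧ T α a β :=
  ⟨fun h => ⟨h.1, _, Sel.map_fst l, h.map_fst⟩,
    fun ⟨hl, _, ha, hT⟩ => pathT_of_sel hcf hl ha hT⟩

lemma multisetAxiom_pathT (hmul : MultisetAxiom T) : MultisetAxiom (PathT μ T) := by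
  rintro α l l' β ⟨hl, hT⟩ hperm
  refine ⟨fun p hp => hl p (hperm.symm.subset hp), fun a ha => ?_⟩
  obtain ⟨b, hb, hba⟩ := List.perm_comp_forall₂ hperm ha
  exact hmul α b a β (hT b hb) hba

lemma compositionAxiom_pathT (hcomp : CompositionAxiom T) : CompositionAxiom (PathT μ T) := by
  rintro α l₁ l₂ l₃ β ν₁ ν₂ h₁ h₂ h₃ ⟨hl, hT⟩ hT₁ ⟨-, hT₂₃⟩ ⟨-, hT₁₂⟩ hT₃
  refine ⟨fun p hp => hl p (by simp [hp]), fun a₂ ha₂ => ?_⟩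
  have ha₁ := Sel.map_fst l₁
  have ha₃ := Sel.map_fst l₃
  exact hcomp α _ a₂ _ β ν₁ ν₂ (ha₁.ne_nil h₁) (ha₂.ne_nil h₂) (ha₃.ne_nil h₃)
    (hT _ ((ha₁.append ha₂).append ha₃)) hT₁.map_fst (hT₂₃ _ (ha₂.append ha₃))
    (hT₁₂ _ (ha₁.append ha₂)) hT₃.map_fst

lemma pathT_singleton_exists (hused : AllUsed T) (hcf : CombFibrant μ T) {u v : L}
    (huv : μ u = μ v) : ∃ α β, PathT μ T α [(u, v)] β := by
  obtain ⟨α, β, hT⟩ := hused u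
  exact ⟨α, β, pathT_of_sel hcf (by simpa using huv) (Sel.map_fst [(u, v)]) hT⟩

lemma intermediateAxiom_pathT (hint : IntermediateAxiom T) (hcf : CombFibrant μ T) :
    IntermediateAxiom (PathT μ T) := by
  rintro α l₁ l₂ β h₁ h₂ hT
  have ha₁ := Sel.map_fst l₁
  have ha₂ := Sel.map_fst l₂
  obtain ⟨ν, hT₁, hT₂⟩ := hint α _ _ β (ha₁.ne_nil h₁) (ha₂.ne_nil h₂)
    (hT.2 _ (ha₁.append ha₂))
  exact ⟨ν, pathT_of_sel hcf (fun p hp => hT.1 p (by simp [hp])) ha₁ hT₁,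
    pathT_of_sel hcf (fun p hp => hT.1 p (by simp [hp])) ha₂ hT₂⟩

end PathT

/-- for a combinatorially fibrant cubical transition system `X`,
the path object `Path(X)` is a cubical transition system (Multiset axiom,
Composition axiom, all its actions — the pairs `(u,v)` with `μ(u)=μ(v)` — are used,
and the Intermediate state axiom), and a tuple is a transition of `Path(X)` iff
there exist `ε₁,…,εₙ ∈ {0,1}` such that the corresponding selection is a
transition of `X`. -/
theorem stmt10 {S L Lab : Type*} (μ : L → Lab) (T : S → List L → S → Prop)
    (hmul : MultisetAxiom T) (hcomp : CompositionAxiom T)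
    (hused : AllUsed T) (hint : IntermediateAxiom T)
    (hcf : CombFibrant μ T) :
    MultisetAxiom (PathT μ T) ∧ CompositionAxiom (PathT μ T) ∧
    (∀ u v : L, μ u = μ v → ∃ α β, PathT μ T α [(u, v)] β) ∧
    IntermediateAxiom (PathT μ T) ∧
    (∀ (α : S) (l : List (L × L)) (β : S),
      PathT μ T α l β ↔
        (∀ p ∈ l, μ p.1 = μ p.2) ∧ ∃ l', Sel l l' ∧ T α l' β) :=
  ⟨multisetAxiom_pathT hmul, compositionAxiom_pathT hcomp,
    fun _ _ => pathT_singleton_exists hused hcf, intermediateAxiom_pathT hint hcf,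
    pathT_iff_exists_sel hcf⟩
end

section
/- For cubical transition systems X = (S, μ : L → Σ, T) and X' = (S', μ' : L' → Σ, T'), the structure X × X' with states S × S', actions L ×_Σ L' = {(u,u') : μ(u) = μ'(u')} labelled by μ, and transitions the tuples ((α,α'),(u₁,u'₁),…,(uₙ,u'ₙ),(β,β')) such that (α,u₁,…,uₙ,β) ∈ T and (α',u'₁,…,u'ₙ,β') ∈ T', is a weak transition system satisfying the Multiset and Composition axioms and the Intermediate state axiom, and the two projections to X and X' are maps of weak transition systems. -/
/-- The transitions of the binary product `X × X'`: states `S × S'`, actions the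
pairs `(u,u')` with `μ(u) = μ'(u')`, and `((α,α'),(u₁,u'₁),…,(uₙ,u'ₙ),(β,β'))` is a
transition iff the labels match componentwise and both projections are
transitions of `X` and `X'` respectively. -/
def ProdT {S S' L L' Lab : Type*} (μ : L → Lab) (μ' : L' → Lab)
    (T : S → List L → S → Prop) (T' : S' → List L' → S' → Prop) :
    S × S' → List (L × L') → S × S' → Prop :=
  fun a l b => (∀ p ∈ l, μ p.1 = μ' p.2) ∧
    T a.1 (l.map Prod.fst) b.1 ∧ T' a.2 (l.map Prod.snd) b.2

/-- for cubical transition systems `X` and `X'`, the product `X × X'`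
is a weak transition system satisfying the Multiset axiom, the Composition axiom
and the Intermediate state axiom, and the two projections are maps of weak
transition systems (they preserve transitions and labels). -/
theorem stmt12 {S S' L L' Lab : Type*} (μ : L → Lab) (μ' : L' → Lab)
    (T : S → List L → S → Prop) (T' : S' → List L' → S' → Prop)
    (hmul : MultisetAxiom T) (hcomp : CompositionAxiom T)
    (hused : AllUsed T) (hint : IntermediateAxiom T)
    (hmul' : MultisetAxiom T') (hcomp' : CompositionAxiom T')
    (hused' : AllUsed T') (hint' : IntermediateAxiom T') :
    MultisetAxiom (ProdT μ μ' T T') ∧ CompositionAxiom (ProdT μ μ' T T') ∧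
    IntermediateAxiom (ProdT μ μ' T T') ∧
    (∀ (a : S × S') (l : List (L × L')) (b : S × S'),
      ProdT μ μ' T T' a l b → T a.1 (l.map Prod.fst) b.1) ∧
    (∀ (a : S × S') (l : List (L × L')) (b : S × S'),
      ProdT μ μ' T T' a l b → T' a.2 (l.map Prod.snd) b.2) := by
  refine ⟨?_, ?_, ?_, fun a l b h => h.2.1, fun a l b h => h.2.2⟩
  · rintro α l l' β ⟨hlab, h1, h2⟩ hp
    exact ⟨fun p hp' => hlab p (hp.mem_iff.mpr hp'),
      hmul _ _ _ _ h1 (hp.map _), hmul' _ _ _ _ h2 (hp.map _)⟩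
  · rintro α l₁ l₂ l₃ β ν₁ ν₂ h1 h2 h3 ⟨hlA, hA1, hA2⟩ ⟨_, hB1, hB2⟩ ⟨_, hC1, hC2⟩
      ⟨_, hD1, hD2⟩ ⟨_, hE1, hE2⟩
    have m1 : l₁.map Prod.fst ≠ [] := by simpa using h1
    have m2 : l₂.map Prod.fst ≠ [] := by simpa using h2
    have m3 : l₃.map Prod.fst ≠ [] := by simpa using h3
    have m1' : l₁.map Prod.snd ≠ [] := by simpa using h1
    have m2' : l₂.map Prod.snd ≠ [] := by simpa using h2
    have m3' : l₃.map Prod.snd ≠ [] := by simpa using h3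
    refine ⟨fun p hp => hlA p (by simp [hp]), ?_, ?_⟩
    · have := hcomp α.1 (l₁.map Prod.fst) (l₂.map Prod.fst) (l₃.map Prod.fst)
        β.1 ν₁.1 ν₂.1 m1 m2 m3 (by simpa using hA1) hB1 (by simpa using hC1)
        (by simpa using hD1) hE1
      exact this
    · have := hcomp' α.2 (l₁.map Prod.snd) (l₂.map Prod.snd) (l₃.map Prod.snd)
        β.2 ν₁.2 ν₂.2 m1' m2' m3' (by simpa using hA2) hB2 (by simpa using hC2)
        (by simpa using hD2) hE2
      exact this
  · rintro α l₁ l₂ β h1 h2 ⟨hlab, hA, hB⟩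
    have m1 : l₁.map Prod.fst ≠ [] := by simpa using h1
    have m2 : l₂.map Prod.fst ≠ [] := by simpa using h2
    have m1' : l₁.map Prod.snd ≠ [] := by simpa using h1
    have m2' : l₂.map Prod.snd ≠ [] := by simpa using h2
    obtain ⟨ν, hν1, hν2⟩ := hint α.1 _ _ β.1 m1 m2 (by simpa using hA)
    obtain ⟨ν', hν1', hν2'⟩ := hint' α.2 _ _ β.2 m1' m2' (by simpa using hB)
    exact ⟨(ν, ν'), ⟨fun p hp => hlab p (by simp [hp]), hν1, hν1'⟩,
      ⟨fun p hp => hlab p (by simp [hp]), hν2, hν2'⟩⟩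
end

section
/- If X is a regular transition system, then its cylinder Cyl(X) (states unchanged, actions L × {0,1}, transitions (α,(u₁,ε₁),…,(uₙ,εₙ),β) iff (α,u₁,…,uₙ,β) is a transition of X) is also regular; in particular Cyl(X) satisfies the Unique intermediate state axiom. -/
/-- The transitions of the cylinder `Cyl(X)`: states are unchanged, actions are
`L × {0,1}` (labelled by `μ(u,ε) = μ(u)`), and `(α,(u₁,ε₁),…,(uₙ,εₙ),β)` is a
transition iff `(α,u₁,…,uₙ,β)` is a transition of `X`. -/
def CylT {S L : Type*} (T : S → List L → S → Prop) :
    S → List (L × Bool) → S → Prop :=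
  fun α l β => T α (l.map Prod.fst) β

/-- if `X` is a regular transition system, then its cylinder
`Cyl(X)` is also regular; in particular `Cyl(X)` satisfies the Unique
intermediate state axiom. -/
theorem stmt14 {S L Lab : Type*} (μ : L → Lab) (T : S → List L → S → Prop)
    (hmul : MultisetAxiom T) (hcomp : CompositionAxiom T)
    (hused : AllUsed T) (hcsa2 : CSA2 T) :
    MultisetAxiom (CylT T) ∧ CompositionAxiom (CylT T) ∧ AllUsed (CylT T) ∧
    CSA2 (CylT T) := by
  refine ⟨?_, ?_, ?_, ?_⟩
  · intro α l l' β h hp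
    exact hmul α _ _ β h (hp.map Prod.fst)
  · intro α l₁ l₂ l₃ β ν₁ ν₂ h1 h2 h3 ht h4 h5 h6 h7
    have e1 : l₁.map Prod.fst ≠ [] := by simpa using h1
    have e2 : l₂.map Prod.fst ≠ [] := by simpa using h2
    have e3 : l₃.map Prod.fst ≠ [] := by simpa using h3
    exact hcomp α _ _ _ β ν₁ ν₂ e1 e2 e3 (by simpa [CylT, List.map_append] using ht) h4
      (by simpa [CylT, List.map_append] using h5) (by simpa [CylT, List.map_append] using h6) h7
  · intro u
    obtain ⟨α, β, h⟩ := hused u.1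
    exact ⟨α, β, by simpa [CylT] using h⟩
  · intro α l₁ l₂ β h1 h2 ht
    have e1 : l₁.map Prod.fst ≠ [] := by simpa using h1
    have e2 : l₂.map Prod.fst ≠ [] := by simpa using h2
    obtain ⟨ν, hν, hu⟩ := hcsa2 α _ _ β e1 e2 (by simpa [CylT, List.map_append] using ht)
    exact ⟨ν, hν, fun ν' h' => hu ν' h'⟩
end

section
/- Let X be a combinatorially fibrant cubical transition system. Then for every pair (u,v) of actions of X with μ(u) = μ(v), there exists a transition (α,(u,v),β) of Path(X); i.e., all actions of Path(X) are used. -/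
/-- if `X` is a combinatorially fibrant cubical transition system,
then for every pair `(u,v)` of actions of `X` with `μ(u) = μ(v)` there is a
transition `(α,(u,v),β)` of `Path(X)`; i.e. all actions of `Path(X)` are used. -/
theorem stmt15 {S L Lab : Type*} (μ : L → Lab) (T : S → List L → S → Prop)
    (hmul : MultisetAxiom T) (hcomp : CompositionAxiom T)
    (hused : AllUsed T) (hint : IntermediateAxiom T)
    (hcf : CombFibrant μ T) :
    ∀ u v : L, μ u = μ v → ∃ α β, PathT μ T α [(u, v)] β := by
  intro u v huv
  obtain ⟨α, β, hT⟩ := hused u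
  refine ⟨α, β, ?_, ?_⟩
  · intro p hp; simp at hp; subst hp; exact huv
  · intro l' hsel
    cases hsel with
    | cons h1 h2 =>
      cases h2
      rcases h1 with h | h <;> rw [h]
      · exact hT
      · exact hcf α [u] [v] β hT (List.Forall₂.cons huv List.Forall₂.nil)
end

section
/- Let X be a cubical transition system with exactly the transitions (I,u,v^-,F), (I,v^-,u,F), (I,u,v^+,F), (I,v^+,u,F), (I,u,(1,0,±)), ((1,0,±),v^±,F), (I,v^±,(0,1,±)), ((0,1,±),u,F), on the state set S = ({0,1}² × {−,+}) / ((0,0,−)=(0,0,+)=I, (1,1,−)=(1,1,+)=F), with three actions u, v^-, v^+ all labelled by x ∈ Σ. Then X satisfies the Unique intermediate state axiom, i.e., X is a regular transition system. -/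
/-- The states of the cubical transition system `W̄`: the quotient of
`{0,1}² × {−,+}` identifying `(0,0,−) = (0,0,+) = I` and `(1,1,−) = (1,1,+) = F`. -/
inductive St16 : Type
  | I | F | s10m | s10p | s01m | s01p

/-- The three actions `u`, `v⁻`, `v⁺`, all labelled by the same `x ∈ Σ`. -/
inductive Act16 : Type
  | u | vm | vp

/-- The transitions of `W̄`. -/
inductive Tr16 : St16 → List Act16 → St16 → Prop
  | uvm : Tr16 .I [.u, .vm] .F
  | vmu : Tr16 .I [.vm, .u] .F
  | uvp : Tr16 .I [.u, .vp] .F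
  | vpu : Tr16 .I [.vp, .u] .F
  | u10m : Tr16 .I [.u] .s10m
  | u10p : Tr16 .I [.u] .s10p
  | vm10 : Tr16 .s10m [.vm] .F
  | vp10 : Tr16 .s10p [.vp] .F
  | vm01 : Tr16 .I [.vm] .s01m
  | vp01 : Tr16 .I [.vp] .s01p
  | u01m : Tr16 .s01m [.u] .F
  | u01p : Tr16 .s01p [.u] .F

instance : DecidableEq Act16 := fun a b => by
  cases a <;> cases b <;> first | exact isTrue rfl | exact isFalse (by simp)

lemma tr16_len {α β : St16} {l : List Act16} (h : Tr16 α l β) : l.length ≤ 2 := by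
  cases h <;> simp

/-- the cubical transition system `W̄` above (with all actions
labelled by `x`) satisfies the Unique intermediate state axiom, i.e. it is a
regular transition system (Multiset axiom, Composition axiom, all actions used,
Intermediate state axiom and CSA2). -/
theorem stmt16 (Lab : Type) (x : Lab) (μ : Act16 → Lab) (hμ : ∀ a, μ a = x) :
    CSA2 Tr16 ∧ MultisetAxiom Tr16 ∧ CompositionAxiom Tr16 ∧ AllUsed Tr16 ∧
    IntermediateAxiom Tr16 := by
  have hcsa2 : CSA2 Tr16 := by
    intro α l₁ l₂ β h1 h2 h
    rcases l₁ with _ | ⟨a, _ | ⟨a', t⟩⟩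
    · exact absurd rfl h1
    case cons.cons =>
      exfalso
      have hlen := tr16_len h
      rw [List.length_append] at hlen
      have p2 := List.length_pos_iff.mpr h2
      simp only [List.length_cons] at hlen
      omega
    rcases l₂ with _ | ⟨b, _ | ⟨b', t'⟩⟩
    · exact absurd rfl h2
    case cons.cons =>
      exfalso
      have hlen := tr16_len h
      simp at hlen
    cases h
    case uvm => exact ⟨.s10m, ⟨Tr16.u10m, Tr16.vm10⟩,
      by rintro ν ⟨h1, h2⟩; cases h1 <;> cases h2 <;> rfl⟩
    case vmu => exact ⟨.s01m, ⟨Tr16.vm01, Tr16.u01m⟩,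
      by rintro ν ⟨h1, h2⟩; cases h1 <;> cases h2 <;> rfl⟩
    case uvp => exact ⟨.s10p, ⟨Tr16.u10p, Tr16.vp10⟩,
      by rintro ν ⟨h1, h2⟩; cases h1 <;> cases h2 <;> rfl⟩
    case vpu => exact ⟨.s01p, ⟨Tr16.vp01, Tr16.u01p⟩,
      by rintro ν ⟨h1, h2⟩; cases h1 <;> cases h2 <;> rfl⟩
  refine ⟨hcsa2, ?_, ?_, ?_, ?_⟩
  · intro α l l' β h hp
    have hl := hp.length_eq
    cases h <;>
      rcases l' with _ | ⟨c, _ | ⟨d, _ | t⟩⟩ <;>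
      first
      | (cases c <;> first | exact absurd hp (by decide) | constructor)
      | (cases c <;> cases d <;> first | exact absurd hp (by decide) | constructor)
      | (exfalso; simp at hl)
      | (exfalso; simp at hl; omega)
  · intro α l₁ l₂ l₃ β ν₁ ν₂ h1 h2 h3 h _ _ _ _
    exfalso
    have hlen := tr16_len h
    have p1 := List.length_pos_iff.mpr h1
    have p2 := List.length_pos_iff.mpr h2
    have p3 := List.length_pos_iff.mpr h3
    rw [List.length_append, List.length_append] at hlen
    omega
  · intro a
    cases a
    exacts [⟨_, _, Tr16.u10m⟩, ⟨_, _, Tr16.vm01⟩, ⟨_, _, Tr16.vp01⟩]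
  · intro α l₁ l₂ β h1 h2 h
    obtain ⟨ν, hν, -⟩ := hcsa2 α l₁ l₂ β h1 h2 h
    exact ⟨ν, hν⟩
end
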